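/- Let G be a countable discrete abelian group with compact dual Ĝ carrying normalized Haar measure μ, A a Banach algebra, and α : G → Aut(A) an isometric action. Define Ψ : C_c(Ĝ × G, A) → C_c(G × G, A) by Ψ(F)(s, t) = ∫_{Ĝ} α_t⁻¹(F(γ, s)) · conj(γ(s⁻¹ t)) dμ(γ). Define the double dual action on C_c(Ĝ × G, A) by (α̂̂_r F)(γ, s) = conj(γ(r)) F(γ, s), and the action ((rt ⊗ α) ⊗ id)_r(H)(s, t) = α_r(H(s, tr)) on C_c(G × G, A). Then for all r ∈ G and F ∈ C_c(Ĝ × G, A): Ψ(α̂̂_r F) = ((rt ⊗ α) ⊗ id)_r(Ψ(F)). -/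

import Mathlib

open MeasureTheory

/-- The composite map `Ψ = Φ₃ ∘ Φ₂ ∘ Φ₁` of the Takai duality construction:
`Ψ(F)(s, t) = ∫_{Ĝ} conj(γ(s⁻¹t)) • α_{t⁻¹}(F(γ, s)) dμ(γ)`. -/
noncomputable def PsiTakai {G : Type*} [CommGroup G] [TopologicalSpace G] [DiscreteTopology G]
    [MeasurableSpace (PontryaginDual G)]
    (μ : Measure (PontryaginDual G))
    {A : Type*} [NormedRing A] [NormedAlgebra ℂ A] [CompleteSpace A]
    (α : G →* (A ≃ₐ[ℂ] A)) (F : PontryaginDual G × G → A) : G × G → A :=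
  fun q => ∫ γ, (starRingEnd ℂ) ((γ (q.1⁻¹ * q.2) : Circle) : ℂ) • α q.2⁻¹ (F (γ, q.1)) ∂μ

/-- **Equivariance of `Ψ = Φ₃ ∘ Φ₂ ∘ Φ₁`** for the double dual action `α̂̂` and the action
`(rt ⊗ α) ⊗ id`: `Ψ(α̂̂_r F) = ((rt ⊗ α) ⊗ id)_r(Ψ(F))`. -/
theorem PsiTakai_equivariant {G : Type*} [CommGroup G] [Countable G]
    [TopologicalSpace G] [DiscreteTopology G]
    [MeasurableSpace (PontryaginDual G)] [BorelSpace (PontryaginDual G)]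
    (μ : Measure (PontryaginDual G)) [μ.IsHaarMeasure] [IsProbabilityMeasure μ]
    {A : Type*} [NormedRing A] [NormedAlgebra ℂ A] [CompleteSpace A]
    (α : G →* (A ≃ₐ[ℂ] A)) (hα : ∀ (s : G) (a : A), ‖α s a‖ = ‖a‖)
    (F : PontryaginDual G × G → A)
    (hFcont : ∀ s : G, Continuous fun γ => F (γ, s))
    (hFfin : ({s : G | ∃ γ, F (γ, s) ≠ 0}).Finite) :
    ∀ r : G,
      PsiTakai μ α (fun q : PontryaginDual G × G =>
          (starRingEnd ℂ) ((q.1 r : Circle) : ℂ) • F q)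
        = fun q : G × G => α r (PsiTakai μ α F (q.1, q.2 * r)) := by
  intro r
  have hcont : ∀ s : G, Continuous (α s) := fun s =>
    (AddMonoidHomClass.isometry_of_norm (α s : A →+ A) (hα s)).continuous
  -- `α r` as a continuous linear equivalence
  let e : A ≃L[ℂ] A :=
    { (α r).toLinearEquiv with
      continuous_toFun := hcont r
      continuous_invFun := by
        have h : ((α r).symm : A → A) = (α r⁻¹ : A → A) := by
          rw [map_inv]; rfl
        have h2 := hcont r⁻¹; rw [← h] at h2; exact h2 }
  funext q
  obtain ⟨s, t⟩ := q
  show (∫ γ, _ ∂μ) = α r (∫ γ, _ ∂μ)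
  have he : ∀ x : A, α r x = e x := fun _ => rfl
  rw [he, ← ContinuousLinearEquiv.integral_comp_comm]
  refine integral_congr_ae (Filter.Eventually.of_forall fun γ => ?_)
  show ((starRingEnd ℂ) ((γ (s⁻¹ * t) : Circle) : ℂ)) •
      α t⁻¹ (((starRingEnd ℂ) ((γ r : Circle) : ℂ)) • F (γ, s))
    = α r (((starRingEnd ℂ) ((γ (s⁻¹ * (t * r)) : Circle) : ℂ)) • α (t * r)⁻¹ (F (γ, s)))
  rw [_root_.map_smul, _root_.map_smul, smul_smul, ← map_mul]
  have h1 : (γ (s⁻¹ * t) : Circle) * (γ r : Circle) = (γ (s⁻¹ * (t * r)) : Circle) := by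
    rw [← map_mul, mul_assoc]
  have h2 : α r (α (t * r)⁻¹ (F (γ, s))) = α t⁻¹ (F (γ, s)) := by
    have : α r * α (t * r)⁻¹ = α t⁻¹ := by
      rw [← map_mul]; congr 1; group
    calc α r (α (t * r)⁻¹ (F (γ, s))) = (α r * α (t * r)⁻¹) (F (γ, s)) := rfl
      _ = α t⁻¹ (F (γ, s)) := by rw [this]
  rw [h2]
  congr 1
  rw [← h1]
  push_cast
  ring
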